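/- Let S_n(x) = Σ_k S_{n,k} x^k and T_n(x) = Σ_k T_{n,k} x^k be the type-B descent polynomials over signed permutations of {1,1,...,n,n} and of {1,1,...,n,n,n+1} (with n+1 positively signed), respectively. Then T_n(x) = (1 + 2nx) S_n(x) + x(1-x) S_n'(x). -/

import Mathlib

open Polynomial

/-- Number of descents of a word. -/
def des (l : List ℤ) : ℕ := ((l.zip l.tail).filter (fun p => p.2 < p.1)).length

/-- Type-B descents: prepend 0. -/
def desB (l : List ℤ) : ℕ := des (0 :: l)

/-- The multiset {1,1,2,2,...,n,n} as a list. -/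
def baseList (n : ℕ) : List ℤ := (List.range n).flatMap (fun i => [(i : ℤ) + 1, (i : ℤ) + 1])

/-- All distinct arrangements (multiset permutations) of a list. -/
def arrangements (l : List ℤ) : List (List ℤ) := l.permutations.dedup

/-- Descent polynomial over arrangements of `l`. -/
noncomputable def desPoly (l : List ℤ) : Polynomial ℝ :=
  ((arrangements l).map (fun w => (X : Polynomial ℝ) ^ des w)).sum

noncomputable def Ppoly (n : ℕ) : Polynomial ℝ := desPoly (baseList n)

noncomputable def Qpoly (n : ℕ) : Polynomial ℝ := desPoly (baseList n ++ [(n : ℤ) + 1])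

/-- All signings of a word. -/
def signings : List ℤ → List (List ℤ)
  | [] => [[]]
  | a :: t => (signings t).flatMap (fun w => [a :: w, (-a) :: w])

/-- All signed permutations of the multiset given by `l`. -/
def signedWords (l : List ℤ) : List (List ℤ) := (arrangements l).flatMap signings

noncomputable def SpolyB (n : ℕ) : Polynomial ℝ :=
  ((signedWords (baseList n)).map (fun w => (X : Polynomial ℝ) ^ desB w)).sum

/-- Signed permutations of {1,1,...,n,n,n+1} in which n+1 carries a plus sign. -/
def Dwords (n : ℕ) : List (List ℤ) :=
  (signedWords (baseList n ++ [(n : ℤ) + 1])).filter (fun w => ((n : ℤ) + 1) ∈ w)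

noncomputable def TpolyB (n : ℕ) : Polynomial ℝ :=
  ((Dwords n).map (fun w => (X : Polynomial ℝ) ^ desB w)).sum

def PcountZ (n : ℕ) (k : ℤ) : ℕ :=
  ((arrangements (baseList n)).filter (fun w => (des w : ℤ) = k)).length

def QcountN (n : ℕ) (k : ℕ) : ℕ :=
  ((arrangements (baseList n ++ [(n : ℤ) + 1])).filter (fun w => des w = k)).length

def ScountZ (n : ℕ) (k : ℤ) : ℕ :=
  ((signedWords (baseList n)).filter (fun w => (desB w : ℤ) = k)).length

def TcountZ (n : ℕ) (k : ℤ) : ℕ :=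
  ((Dwords n).filter (fun w => (desB w : ℤ) = k)).length

/-! Every signed word counted by `TpolyB n` arises exactly once by inserting the letter `n + 1`
into one of the `2n + 1` slots of a signed word `w` counted by `SpolyB n`, the slots being the
gaps after the letters of `0 :: w`. As `n + 1` exceeds every letter, inserting it into a descent
slot or at the end keeps `desB w = d`, while each of the `2n - d` ascent slots raises it by one.
So `w` contributes `(d + 1) x^d + (2n - d) x^(d + 1) = (1 + 2nx) x^d + x (1 - x) (x^d)'`. -/

open List

lemma des_singleton (c : ℤ) : des [c] = 0 := by simp [des]

lemma des_cons_cons (x y : ℤ) (r : List ℤ) :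
    des (x :: y :: r) = (if y < x then 1 else 0) + des (y :: r) := by
  simp only [des, zip, tail, zipWith, filter_cons]
  split <;> simp_all [Nat.add_comm]

theorem sum_pow_des_insertIdx_of_forall_lt {R : Type*} [CommRing R] (x : R) {b : ℤ} :
    ∀ (w : List ℤ) (c : ℤ), c < b → (∀ a ∈ w, a < b) →
      ((range (w.length + 1)).map fun i => x ^ des (c :: w.insertIdx i b)).sum
        = (des (c :: w) + 1 : R) * x ^ des (c :: w)
          + (w.length - des (c :: w) : R) * x ^ (des (c :: w) + 1)
  | [], c, hc, _ => by simp [des_singleton, des_cons_cons, hc.not_gt]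
  | a :: t, c, hc, hw => by
    have ha : a < b := hw a mem_cons_self
    have ih := sum_pow_des_insertIdx_of_forall_lt x t a ha fun y hy => hw y (mem_cons_of_mem a hy)
    have h_front : des (c :: b :: a :: t) = des (a :: t) + 1 := by
      simp [des_cons_cons, hc.not_gt, ha, Nat.add_comm]
    rw [range_succ_eq_map, map_cons, sum_cons, map_map]
    simp only [Function.comp_def, insertIdx_zero, insertIdx_succ_cons, h_front,
      des_cons_cons c a, pow_add, sum_map_mul_left, ih, length_cons]
    split_ifs <;> push_cast <;> ring

section SignedWords

lemma mem_signings_iff : ∀ {p : List ℤ}, (∀ a ∈ p, 0 ≤ a) → ∀ {v : List ℤ},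
    v ∈ signings p ↔ v.map abs = p
  | [], _, v => by simp [signings]
  | _ :: _, _, [] => by simp [signings]
  | a :: t, hp, y :: u => by
    have ih := @mem_signings_iff t (fun z hz => hp z (mem_cons_of_mem a hz)) u
    simp only [signings, mem_flatMap, mem_cons, cons.injEq, not_mem_nil, or_false, map_cons,
      abs_eq (hp a mem_cons_self)]
    constructor
    · rintro ⟨u, hu, ⟨rfl, rfl⟩ | ⟨rfl, rfl⟩⟩ <;> simp_all
    · rintro ⟨hy, hu⟩
      exact ⟨u, ih.2 hu, hy.imp (⟨·, rfl⟩) (⟨·, rfl⟩)⟩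

lemma nodup_signings : ∀ {p : List ℤ}, (∀ a ∈ p, 0 < a) → (signings p).Nodup
  | [], _ => by simp [signings]
  | a :: t, hp => by
    have ha : a ≠ -a := by have := hp a mem_cons_self; omega
    refine nodup_flatMap.2 ⟨fun w _ => by simp [ha], ?_⟩
    refine (nodup_signings fun z hz => hp z (mem_cons_of_mem a hz)).pairwise_of_forall_ne ?_
    intro u _ v _ huv
    simp [Function.onFun, huv.symm]

variable {l : List ℤ}

lemma mem_arrangements_iff {p : List ℤ} : p ∈ arrangements l ↔ p ~ l := by
  simp [arrangements]

lemma mem_signedWords_iff (hl : ∀ a ∈ l, 0 < a) {v : List ℤ} :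
    v ∈ signedWords l ↔ v.map abs ~ l := by
  simp only [signedWords, mem_flatMap, mem_arrangements_iff]
  constructor
  · rintro ⟨p, hp, hv⟩
    rwa [(mem_signings_iff fun a ha => (hl a (hp.mem_iff.1 ha)).le).1 hv]
  · intro h
    exact ⟨_, h, (mem_signings_iff fun a ha => (hl a (h.mem_iff.1 ha)).le).2 rfl⟩

lemma abs_mem_of_mem_signedWords (hl : ∀ a ∈ l, 0 < a) {v : List ℤ} (hv : v ∈ signedWords l)
    {x : ℤ} (hx : x ∈ v) : |x| ∈ l :=
  ((mem_signedWords_iff hl).1 hv).subset (mem_map_of_mem hx)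

lemma nodup_signedWords (hl : ∀ a ∈ l, 0 < a) : (signedWords l).Nodup := by
  have hpos : ∀ p ∈ arrangements l, ∀ a ∈ p, 0 < a := fun p hp a ha =>
    hl a ((mem_arrangements_iff.1 hp).mem_iff.1 ha)
  refine nodup_flatMap.2 ⟨fun p hp => nodup_signings (hpos p hp), ?_⟩
  refine (nodup_dedup _).pairwise_of_forall_ne fun p hp q hq hpq v hvp hvq => hpq ?_
  rw [← (mem_signings_iff fun a ha => (hpos p hp a ha).le).1 hvp,
    ← (mem_signings_iff fun a ha => (hpos q hq a ha).le).1 hvq]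

end SignedWords

section Insertions

variable {α : Type*}

def insertions (b : α) (w : List α) : List (List α) :=
  (range (w.length + 1)).map (w.insertIdx · b)

lemma idxOf_insertIdx_of_not_mem [DecidableEq α] {b : α} :
    ∀ {l : List α} {i : ℕ}, b ∉ l → i ≤ l.length → (l.insertIdx i b).idxOf b = i
  | _, 0, _, _ => by simp
  | [], _ + 1, _, h => by simp at h
  | a :: _, i + 1, hb, h => by
    rw [insertIdx_succ_cons, idxOf_cons_ne _ (ne_of_not_mem_cons hb).symm,
      idxOf_insertIdx_of_not_mem (not_mem_of_not_mem_cons hb) (Nat.le_of_succ_le_succ h)]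

lemma eq_and_eq_of_insertIdx_eq_insertIdx [DecidableEq α] {b : α} {w w' : List α} {i j : ℕ}
    (hw : b ∉ w) (hw' : b ∉ w') (hi : i ≤ w.length) (hj : j ≤ w'.length)
    (h : w.insertIdx i b = w'.insertIdx j b) : i = j ∧ w = w' := by
  obtain rfl : i = j := by
    rw [← idxOf_insertIdx_of_not_mem hw hi, ← idxOf_insertIdx_of_not_mem hw' hj, h]
  exact ⟨rfl, insertIdx_injective i b h⟩

lemma insertIdx_length_append (s t : List α) (b : α) :
    (s ++ t).insertIdx s.length b = s ++ b :: t := by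
  induction s <;> simp_all [insertIdx_succ_cons]

lemma mem_insertions {b : α} {w v : List α} :
    v ∈ insertions b w ↔ ∃ i ≤ w.length, w.insertIdx i b = v := by
  simp [insertions]

lemma nodup_insertions [DecidableEq α] {b : α} {w : List α} (hw : b ∉ w) :
    (insertions b w).Nodup :=
  nodup_range.map_on fun _ hi _ hj h =>
    (eq_and_eq_of_insertIdx_eq_insertIdx hw hw (Nat.lt_succ_iff.1 (mem_range.1 hi))
      (Nat.lt_succ_iff.1 (mem_range.1 hj)) h).1

lemma eq_of_mem_insertions_of_mem_insertions [DecidableEq α] {b : α} {w w' v : List α}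
    (hw : b ∉ w) (hw' : b ∉ w') (hv : v ∈ insertions b w) (hv' : v ∈ insertions b w') :
    w = w' := by
  obtain ⟨i, hi, rfl⟩ := mem_insertions.1 hv
  obtain ⟨j, hj, h⟩ := mem_insertions.1 hv'
  exact (eq_and_eq_of_insertIdx_eq_insertIdx hw hw' hi hj h.symm).2

end Insertions

section Decomposition

variable {l : List ℤ} {b : ℤ}

theorem filter_mem_signedWords_append_perm (hl : ∀ a ∈ l, 0 < a) (hb : 0 < b) (hbl : b ∉ l) :
    (signedWords (l ++ [b])).filter (b ∈ ·) ~ (signedWords l).flatMap (insertions b) := by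
  have hlb : ∀ a ∈ l ++ [b], 0 < a := by simpa [or_imp, forall_and] using ⟨hl, hb⟩
  have hb_not_mem : ∀ w ∈ signedWords l, b ∉ w := fun w hw hbw =>
    hbl (abs_of_pos hb ▸ abs_mem_of_mem_signedWords hl hw hbw)
  refine (perm_ext_iff_of_nodup ((nodup_signedWords hlb).filter _) ?_).2 fun v => ?_
  · refine nodup_flatMap.2 ⟨fun w hw => nodup_insertions (hb_not_mem w hw), ?_⟩
    exact (nodup_signedWords hl).pairwise_of_forall_ne fun w hw w' hw' hne v hv hv' =>
      hne (eq_of_mem_insertions_of_mem_insertions (hb_not_mem w hw) (hb_not_mem w' hw') hv hv')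
  simp only [mem_filter, decide_eq_true_eq, mem_signedWords_iff hlb, mem_flatMap,
    mem_insertions, mem_signedWords_iff hl]
  constructor
  · rintro ⟨hv, hbv⟩
    obtain ⟨s, t, rfl⟩ := append_of_mem hbv
    refine ⟨s ++ t, (perm_cons b).1 ?_, s.length, by simp, insertIdx_length_append s t b⟩
    calc b :: (s ++ t).map abs
        ~ (s ++ b :: t).map abs := by simpa [abs_of_pos hb] using perm_middle.symm
      _ ~ l ++ [b] := hv
      _ ~ b :: l := perm_append_singleton b l
  · rintro ⟨w, hw, i, hi, rfl⟩
    refine ⟨?_, (mem_insertIdx hi).2 (Or.inl rfl)⟩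
    calc (w.insertIdx i b).map abs
        = (w.map abs).insertIdx i b := by rw [map_insertIdx, abs_of_pos hb]
      _ ~ b :: w.map abs := perm_insertIdx b _ (by simpa using hi)
      _ ~ b :: l := hw.cons b
      _ ~ l ++ [b] := (perm_append_singleton b l).symm

theorem sum_pow_desB_filter_mem_signedWords_append {R : Type*} [CommRing R] (x : R)
    (hl : ∀ a ∈ l, 0 < a) (hb : 0 < b) (hlb : ∀ a ∈ l, a < b) :
    (((signedWords (l ++ [b])).filter (b ∈ ·)).map fun v => x ^ desB v).sum
      = ((signedWords l).map fun w =>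
          (desB w + 1 : R) * x ^ desB w + (l.length - desB w : R) * x ^ (desB w + 1)).sum := by
  rw [((filter_mem_signedWords_append_perm hl hb fun h => (hlb b h).false).map _).sum_eq]
  simp only [flatMap, map_flatten, sum_flatten, map_map]
  refine congrArg List.sum (map_congr_left fun w hw => ?_)
  have hw_lt : ∀ a ∈ w, a < b := fun a ha =>
    (le_abs_self a).trans_lt (hlb _ (abs_mem_of_mem_signedWords hl hw ha))
  rw [Function.comp_apply, Function.comp_apply, insertions, map_map,
    ← ((mem_signedWords_iff hl).1 hw).length_eq, length_map]
  exact sum_pow_des_insertIdx_of_forall_lt x w 0 hb hw_lt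

end Decomposition

lemma pos_and_le_of_mem_baseList {n : ℕ} {a : ℤ} (h : a ∈ baseList n) :
    0 < a ∧ a ≤ n := by
  simp only [baseList, pure_def, bind_eq_flatMap, mem_flatMap, mem_range, mem_cons, not_mem_nil,
    or_false, or_self, ↓existsAndEq, and_true] at h
  omega

lemma length_baseList (n : ℕ) : (baseList n).length = 2 * n := by
  simp [baseList, mul_comm]

lemma natCast_succ_mul_X_pow_add_sub_mul_X_pow_succ {R : Type*} [CommRing R] (m : R[X])
    (k : ℕ) : (k + 1 : R[X]) * X ^ k + (m - (k : R[X])) * X ^ (k + 1)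
      = (1 + m * X) * X ^ k + X * (1 - X) * derivative (X ^ k) := by
  cases k with
  | zero => simp
  | succ j => rw [derivative_X_pow, map_natCast, Nat.add_sub_cancel]; push_cast; ring

theorem stmt11_general (n : ℕ) :
    TpolyB n = (1 + 2 * (n : Polynomial ℝ) * X) * SpolyB n
      + X * (1 - X) * derivative (SpolyB n) := by
  have hT : TpolyB n = ((signedWords (baseList n)).map fun w =>
      (1 + 2 * (n : ℝ[X]) * X) * X ^ desB w + X * (1 - X) * derivative (X ^ desB w)).sum := by
    rw [TpolyB, Dwords, sum_pow_desB_filter_mem_signedWords_append X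
      (fun a ha => (pos_and_le_of_mem_baseList ha).1) (by positivity)
      (fun a ha => Int.lt_add_one_of_le (pos_and_le_of_mem_baseList ha).2), length_baseList]
    push_cast
    simp only [natCast_succ_mul_X_pow_add_sub_mul_X_pow_succ]
  rw [hT, sum_map_add, sum_map_mul_left, sum_map_mul_left, SpolyB, map_list_sum, List.map_map]
  rfl

/-- Tₙ(x) = (1 + 2nx) Sₙ(x) + x(1-x) Sₙ'(x). -/
theorem stmt11 (n : ℕ) (hn : 1 ≤ n) :
    TpolyB n = (1 + 2 * (n : Polynomial ℝ) * X) * SpolyB n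
      + X * (1 - X) * derivative (SpolyB n) :=
  stmt11_general n
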